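/- arXiv:1906.04620 — 2 statements merged into one kernel-verified Lean document; each statement's English description precedes it below -/
import Mathlib

section
/- Let G be a finite group, S ⊆ G, and Γ = Cay(G,S). Then Cay(G,S) is a CI-digraph if and only if for every permutation σ of G such that the conjugate subgroup σ Ĝ σ⁻¹ is contained in Aut(Γ), there exists τ ∈ Aut(Γ) with σ Ĝ σ⁻¹ = τ Ĝ τ⁻¹; that is, every subgroup of Aut(Γ) conjugate to Ĝ in Perm G is conjugate to Ĝ in Aut(Γ). -/
/-- A permutation `e` is an automorphism of the digraph with adjacency `Adj`. -/
def IsDigraphAut {V : Type*} (Adj : V → V → Prop) (e : Equiv.Perm V) : Prop :=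
  ∀ x y, Adj x y ↔ Adj (e x) (e y)

/-- The automorphism group of a digraph, as a subgroup of the permutation group. -/
def autGroup {V : Type*} (Adj : V → V → Prop) : Subgroup (Equiv.Perm V) where
  carrier := {e | IsDigraphAut Adj e}
  one_mem' := by intro x y; exact Iff.rfl
  mul_mem' := by
    intro a b ha hb x y
    exact (hb x y).trans (ha (b x) (b y))
  inv_mem' := by
    intro a ha x y
    simpa using (ha (a⁻¹ x) (a⁻¹ y)).symm

/-- A digraph is arc-transitive if its automorphism group is transitive on arcs. -/
def ArcTransitive {V : Type*} (Adj : V → V → Prop) : Prop :=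
  ∀ x y u v, Adj x y → Adj u v → ∃ e ∈ autGroup Adj, e x = u ∧ e y = v

/-- A subgroup of the permutation group of `V` is regular on `V`. -/
def IsRegularSub {V : Type*} (H : Subgroup (Equiv.Perm V)) : Prop :=
  ∀ u v : V, ∃! h : H, (h : Equiv.Perm V) u = v

/-- A circulant: the automorphism group contains a regular cyclic subgroup. -/
def IsCirculant {V : Type*} (Adj : V → V → Prop) : Prop :=
  ∃ H : Subgroup (Equiv.Perm V), H ≤ autGroup Adj ∧ IsCyclic H ∧ IsRegularSub H

/-- A normal circulant: the automorphism group contains a regular cyclic subgroup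
that is normal in the automorphism group. -/
def IsNormalCirculant {V : Type*} (Adj : V → V → Prop) : Prop :=
  ∃ H : Subgroup (Equiv.Perm V), H ≤ autGroup Adj ∧ IsCyclic H ∧ IsRegularSub H ∧
    ∀ e ∈ autGroup Adj, ∀ h ∈ H, e * h * e⁻¹ ∈ H

/-- Tensor (direct) product of digraphs. -/
def tensorAdj {V₁ V₂ : Type*} (Adj₁ : V₁ → V₁ → Prop) (Adj₂ : V₂ → V₂ → Prop) :
    V₁ × V₂ → V₁ × V₂ → Prop :=
  fun p q => Adj₁ p.1 q.1 ∧ Adj₂ p.2 q.2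

/-- Lexicographic product `Γ[Kbar_b]` with the edgeless digraph on `b` vertices. -/
def lexAdj {V : Type*} (Adj : V → V → Prop) (b : ℕ) : V × Fin b → V × Fin b → Prop :=
  fun p q => Adj p.1 q.1

/-- Digraph isomorphism. -/
def DigraphIso {V₁ V₂ : Type*} (Adj₁ : V₁ → V₁ → Prop) (Adj₂ : V₂ → V₂ → Prop) : Prop :=
  ∃ e : V₁ ≃ V₂, ∀ x y, Adj₁ x y ↔ Adj₂ (e x) (e y)

/-- Connectedness: the reflexive–symmetric–transitive closure of adjacency
relates every pair of vertices. -/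
def DigraphConnected {V : Type*} (Adj : V → V → Prop) : Prop :=
  ∀ u v : V, Relation.ReflTransGen (fun a b => Adj a b ∨ Adj b a) u v

/-- R-thick digraph: two distinct vertices with the same in- and out-neighbourhoods. -/
def RThick {V : Type*} (Adj : V → V → Prop) : Prop :=
  ∃ u v : V, u ≠ v ∧ (∀ w, Adj u w ↔ Adj v w) ∧ (∀ w, Adj w u ↔ Adj w v)

/-- The directed 4-cycle on `ZMod 4`. -/
def C4Adj : ZMod 4 → ZMod 4 → Prop := fun x y => y - x = 1 ∨ y - x = 3

/-- Cayley digraph of a group `G` with connection set `S`. -/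
def cayAdj (G : Type*) [Group G] (S : Set G) : G → G → Prop :=
  fun x y => y * x⁻¹ ∈ S

/-- The right-regular representation of `G` inside `Equiv.Perm G`. -/
def rightReg (G : Type*) [Group G] : Subgroup (Equiv.Perm G) where
  carrier := {e | ∃ g : G, ∀ x, e x = x * g}
  one_mem' := ⟨1, by simp⟩
  mul_mem' := by
    rintro a b ⟨g, hg⟩ ⟨h, hh⟩
    exact ⟨h * g, fun x => by simp [Equiv.Perm.mul_apply, hh, hg, mul_assoc]⟩
  inv_mem' := by
    rintro a ⟨g, hg⟩
    refine ⟨g⁻¹, fun x => a.injective ?_⟩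
    rw [← Equiv.Perm.mul_apply, mul_inv_cancel, Equiv.Perm.one_apply, hg]
    simp

/-- Cayley digraph of `ZMod n` with connection set `S`. -/
def zcayAdj (n : ℕ) (S : Set (ZMod n)) : ZMod n → ZMod n → Prop :=
  fun x y => y - x ∈ S

/-- The translation subgroup of `Equiv.Perm (ZMod n)`. -/
def transSub (n : ℕ) : Subgroup (Equiv.Perm (ZMod n)) where
  carrier := {e | ∃ g : ZMod n, ∀ x, e x = x + g}
  one_mem' := ⟨0, by simp⟩
  mul_mem' := by
    rintro a b ⟨g, hg⟩ ⟨h, hh⟩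
    exact ⟨h + g, fun x => by simp [Equiv.Perm.mul_apply, hh, hg, add_assoc]⟩
  inv_mem' := by
    rintro a ⟨g, hg⟩
    refine ⟨-g, fun x => a.injective ?_⟩
    rw [← Equiv.Perm.mul_apply, mul_inv_cancel, Equiv.Perm.one_apply, hg]
    simp

/-- `Cay(G,S)` is a CI-digraph. -/
def IsCIDigraph {G : Type*} [Group G] (S : Set G) : Prop :=
  ∀ T : Set G, DigraphIso (cayAdj G S) (cayAdj G T) → ∃ α : G ≃* G, T = ⇑α '' S
/-!
A digraph on `G` is a Cayley digraph exactly when `Ĝ` acts on it by automorphisms. Hence if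
`σ Ĝ σ⁻¹ ≤ Aut(Cay(G,S))`, then `σ` is an isomorphism onto `Cay(G,S)` from the Cayley
digraph `Cay(G,T)` obtained by pulling back along `σ`; conversely every isomorphism
`Cay(G,S) ≅ Cay(G,T)` arises this way. Two conjugates `σ Ĝ σ⁻¹` and `τ Ĝ τ⁻¹` coincide iff
`τ⁻¹ σ` normalises `Ĝ`, and the normaliser of `Ĝ` in `Sym(G)` consists of the maps
`x ↦ α x * c` with `α ∈ Aut(G)`. Right translations preserve every Cayley digraph, so
"conjugate in `Aut(Γ)`" becomes "isomorphic via a group automorphism".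
-/

lemma autGroup_pullback {V : Type*} (Adj : V → V → Prop) (e : Equiv.Perm V) :
    autGroup (fun x y => Adj (e x) (e y)) = (autGroup Adj).comap (MulAut.conj e).toMonoidHom := by
  ext a
  change (∀ x y, _ ↔ _) ↔ ∀ x y, _ ↔ _
  conv_rhs => rw [e.surjective.forall]; enter [x]; rw [e.surjective.forall]
  simp [Equiv.Perm.mul_apply]

lemma Subgroup.map_conj_eq_map_conj_iff {M : Type*} [Group M] (H : Subgroup M) (a b : M) :
    H.map (MulAut.conj a).toMonoidHom = H.map (MulAut.conj b).toMonoidHom ↔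
      b⁻¹ * a ∈ Subgroup.normalizer (H : Set M) := by
  have hcomp : ∀ c d : M, (MulAut.conj c).toMonoidHom.comp (MulAut.conj d).toMonoidHom =
      (MulAut.conj (c * d)).toMonoidHom := fun c d => by ext; simp [mul_assoc]
  rw [Subgroup.mem_normalizer_iff_map_conj_eq, ← (Subgroup.map_injective
    (f := (MulAut.conj b⁻¹).toMonoidHom) (MulAut.conj b⁻¹).injective).eq_iff]
  simp only [Subgroup.map_map, hcomp, inv_mul_cancel, map_one]
  rw [show (1 : MulAut M).toMonoidHom = MonoidHom.id M from rfl, Subgroup.map_id]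
  rfl

section Cayley

variable {G : Type*} [Group G]

lemma cayAdj_mul_right (S : Set G) (x y c : G) :
    cayAdj G S (x * c) (y * c) ↔ cayAdj G S x y := by
  simp only [cayAdj, mul_inv_rev, mul_assoc, mul_inv_cancel_left]

lemma rightReg_le_autGroup_cayAdj (S : Set G) : rightReg G ≤ autGroup (cayAdj G S) := by
  rintro e ⟨g, hg⟩ x y
  rw [hg, hg, cayAdj_mul_right]

lemma cayAdj_setOf_eq_of_rightReg_le {Adj : G → G → Prop} (h : rightReg G ≤ autGroup Adj) :
    cayAdj G {g | Adj 1 g} = Adj := by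
  funext x y
  have := h (⟨x⁻¹, fun _ => rfl⟩ : Equiv.mulRight x⁻¹ ∈ rightReg G) x y
  simpa [cayAdj] using this.symm

lemma cayAdj_iso_mulEquiv_iff (S T : Set G) (α : G ≃* G) :
    (∀ x y, cayAdj G S x y ↔ cayAdj G T (α x) (α y)) ↔ T = α '' S := by
  simp only [cayAdj, ← map_inv, ← map_mul]
  constructor
  · intro h
    ext t
    obtain ⟨g, rfl⟩ := α.surjective t
    simpa [α.injective.mem_set_image] using (h 1 g).symm
  · rintro rfl x y
    rw [α.injective.mem_set_image]

lemma mem_rightReg_iff {e : Equiv.Perm G} : e ∈ rightReg G ↔ ∃ g, e = Equiv.mulRight g :=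
  exists_congr fun _ => ⟨fun h => Equiv.ext h, fun h x => by rw [h]; rfl⟩

lemma MulEquiv.conj_mulRight (α : G ≃* G) (g : G) :
    α.toEquiv * Equiv.mulRight g * α.toEquiv⁻¹ = Equiv.mulRight (α g) := by
  ext x
  simp [Equiv.Perm.mul_apply]

lemma mulEquiv_mem_normalizer_rightReg (α : G ≃* G) :
    α.toEquiv ∈ Subgroup.normalizer (rightReg G : Set (Equiv.Perm G)) := by
  refine Subgroup.mem_normalizer_iff.mpr fun h => ?_
  simp only [mem_rightReg_iff]
  constructor
  · rintro ⟨g, rfl⟩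
    exact ⟨α g, α.conj_mulRight g⟩
  · rintro ⟨g, hg⟩
    refine ⟨α.symm g, ?_⟩
    rw [← α.symm.conj_mulRight, ← hg]
    ext x
    simp [Equiv.Perm.mul_apply]

lemma exists_mulEquiv_of_mem_normalizer_rightReg {β : Equiv.Perm G}
    (hβ : β ∈ Subgroup.normalizer (rightReg G : Set (Equiv.Perm G))) :
    ∃ α : G ≃* G, ∀ x, β x = α x * β 1 := by
  have hmul : ∀ x y, β (x * y) = β x * (β 1)⁻¹ * β y := by
    intro x y
    obtain ⟨g, hg⟩ := (Subgroup.mem_normalizer_iff.mp hβ _).mp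
      (⟨y, fun _ => rfl⟩ : Equiv.mulRight y ∈ rightReg G)
    have hshift : ∀ z, β (z * y) = β z * g := fun z => by
      simpa [Equiv.Perm.mul_apply] using hg (β z)
    have hg1 := hshift 1
    rw [one_mul] at hg1
    rw [hshift, hg1]
    group
  refine ⟨MulEquiv.mk' (β.trans (Equiv.mulRight (β 1)⁻¹)) fun x y => ?_, fun x => ?_⟩
  · simp [hmul, mul_assoc]
  · exact (inv_mul_cancel_right _ _).symm

end Cayley

theorem stmt10_general {G : Type*} [Group G] (S : Set G) :
    IsCIDigraph S ↔
    ∀ σ : Equiv.Perm G,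
      Subgroup.map (MulAut.conj σ).toMonoidHom (rightReg G) ≤ autGroup (cayAdj G S) →
      ∃ τ ∈ autGroup (cayAdj G S),
        Subgroup.map (MulAut.conj σ).toMonoidHom (rightReg G) =
          Subgroup.map (MulAut.conj τ).toMonoidHom (rightReg G) := by
  constructor
  · intro hCI σ hσ
    rw [Subgroup.map_le_iff_le_comap, ← autGroup_pullback] at hσ
    set T : Set G := {g | cayAdj G S (σ 1) (σ g)}
    have hT : ∀ x y, cayAdj G T x y ↔ cayAdj G S (σ x) (σ y) := fun x y => by
      rw [cayAdj_setOf_eq_of_rightReg_le hσ]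
    obtain ⟨α, hα⟩ := hCI T ⟨σ⁻¹, fun x y => by simp [hT]⟩
    refine ⟨σ * α.toEquiv, fun x y => ?_, ?_⟩
    · rw [(cayAdj_iso_mulEquiv_iff S T α).mpr hα, hT]
      rfl
    · rw [Subgroup.map_conj_eq_map_conj_iff, mul_inv_rev, inv_mul_cancel_right]
      exact inv_mem (mulEquiv_mem_normalizer_rightReg α)
  · rintro h T ⟨e, he⟩
    have hpull : (fun x y => cayAdj G S (e⁻¹ x) (e⁻¹ y)) = cayAdj G T := by
      funext x y
      exact propext (by simpa using (he (e⁻¹ x) (e⁻¹ y)))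
    have hle : (rightReg G).map (MulAut.conj e⁻¹).toMonoidHom ≤ autGroup (cayAdj G S) := by
      rw [Subgroup.map_le_iff_le_comap, ← autGroup_pullback, hpull]
      exact rightReg_le_autGroup_cayAdj T
    obtain ⟨τ, hτ, heq⟩ := h e⁻¹ hle
    obtain ⟨α, hα⟩ := exists_mulEquiv_of_mem_normalizer_rightReg
      ((Subgroup.map_conj_eq_map_conj_iff _ _ _).mp heq)
    have hiso : ∀ x y, cayAdj G T x y ↔ cayAdj G S (α x) (α y) := fun x y => by
      rw [← cayAdj_mul_right S _ _ ((τ⁻¹ * e⁻¹) 1), ← hα, ← hα, ← hpull]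
      exact inv_mem hτ _ _
    refine ⟨α.symm, ?_⟩
    rw [(cayAdj_iso_mulEquiv_iff T S α).mp hiso]
    simp [Set.image_image]

theorem stmt10 {G : Type*} [Group G] [Fintype G] (S : Set G) :
    IsCIDigraph S ↔
    ∀ σ : Equiv.Perm G,
      Subgroup.map (MulAut.conj σ).toMonoidHom (rightReg G) ≤ autGroup (cayAdj G S) →
      ∃ τ ∈ autGroup (cayAdj G S),
        Subgroup.map (MulAut.conj σ).toMonoidHom (rightReg G) =
          Subgroup.map (MulAut.conj τ).toMonoidHom (rightReg G) :=
  stmt10_general S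
end

section
/- Let Γ be a loopless vertex-transitive digraph on a finite vertex type V that is R-thick. Then there exist an integer b ≥ 2, a finite type W, and a digraph Σ on W such that Γ is isomorphic to Σ[Kbar_b]. -/
/-! Vertices with the same in- and out-neighbourhoods ("twins") form an equivalence relation
that every automorphism preserves, so under vertex-transitivity all twin classes have the same
size `b`, and R-thickness gives `b ≥ 2`. Adjacency only depends on twin classes, so `Γ` is the
quotient digraph on the twin classes blown up by `Kbar_b`. -/

def IsTwin {V : Type*} (Adj : V → V → Prop) (u v : V) : Prop :=
  (∀ w, Adj u w ↔ Adj v w) ∧ (∀ w, Adj w u ↔ Adj w v)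

theorem isTwin_equivalence {V : Type*} (Adj : V → V → Prop) : Equivalence (IsTwin Adj) where
  refl _ := ⟨fun _ => Iff.rfl, fun _ => Iff.rfl⟩
  symm h := ⟨fun w => (h.1 w).symm, fun w => (h.2 w).symm⟩
  trans h₁ h₂ := ⟨fun w => (h₁.1 w).trans (h₂.1 w), fun w => (h₁.2 w).trans (h₂.2 w)⟩

def twinSetoid {V : Type*} (Adj : V → V → Prop) : Setoid V :=
  ⟨IsTwin Adj, isTwin_equivalence Adj⟩

theorem IsDigraphAut.isTwin_apply_iff {V : Type*} {Adj : V → V → Prop} {e : Equiv.Perm V}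
    (he : IsDigraphAut Adj e) (x y : V) : IsTwin Adj (e x) (e y) ↔ IsTwin Adj x y := by
  unfold IsTwin
  rw [← e.forall_congr_right, ← e.forall_congr_right (q := fun w => Adj w (e x) ↔ _)]
  simp only [← he _ _]

theorem natCard_twinClass_eq {V : Type*} {Adj : V → V → Prop}
    (hvt : ∀ u v : V, ∃ e ∈ autGroup Adj, e u = v) (u v : V) :
    Nat.card {x // IsTwin Adj x u} = Nat.card {x // IsTwin Adj x v} := by
  obtain ⟨e, he, rfl⟩ := hvt u v
  exact Nat.card_congr <| e.subtypeEquiv fun x => (he.isTwin_apply_iff x u).symm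

-- Well defined because twins have the same out- and in-neighbourhoods.
def twinQuotientAdj {V : Type*} (Adj : V → V → Prop) :
    Quotient (twinSetoid Adj) → Quotient (twinSetoid Adj) → Prop :=
  Quotient.lift₂ Adj fun _ y x' _ hx hy => propext ((hx.1 y).trans (hy.2 x'))

@[simp]
theorem twinQuotientAdj_mk {V : Type*} (Adj : V → V → Prop) (x y : V) :
    twinQuotientAdj Adj ⟦x⟧ ⟦y⟧ ↔ Adj x y :=
  Iff.rfl

theorem digraphIso_lexAdj_of_natCard_fiber {V W : Type*} {Adj : V → V → Prop}
    {Adj₂ : W → W → Prop} {b : ℕ} (f : V → W) (hf : ∀ x y, Adj x y ↔ Adj₂ (f x) (f y))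
    [∀ w, Finite {v // f v = w}] (hcard : ∀ w, Nat.card {v // f v = w} = b) :
    DigraphIso Adj (lexAdj Adj₂ b) :=
  ⟨(Equiv.sigmaFiberEquiv f).symm.trans
      (Equiv.sigmaEquivProdOfEquiv fun w => Finite.equivFinOfCardEq (hcard w)),
    hf⟩

theorem stmt12_general {V : Type*} [Fintype V] (Adj : V → V → Prop)
    (hvt : ∀ u v : V, ∃ e ∈ autGroup Adj, e u = v)
    (hthick : RThick Adj) :
    ∃ (b : ℕ) (W : Type) (_ : Fintype W) (Adj₂ : W → W → Prop),
      2 ≤ b ∧ DigraphIso Adj (lexAdj Adj₂ b) := by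
  obtain ⟨u₀, v₀, hne, htwin⟩ := hthick
  have hb : 2 ≤ Nat.card {x // IsTwin Adj x u₀} := by
    have : Nontrivial {x // IsTwin Adj x u₀} :=
      ⟨⟨u₀, (isTwin_equivalence Adj).refl u₀⟩, ⟨v₀, (isTwin_equivalence Adj).symm htwin⟩,
        Subtype.coe_ne_coe.mp hne⟩
    exact Finite.one_lt_card
  let φ := Finite.equivFin (Quotient (twinSetoid Adj))
  refine ⟨_, _, inferInstance, fun a c => twinQuotientAdj Adj (φ.symm a) (φ.symm c), hb,
    digraphIso_lexAdj_of_natCard_fiber (fun v => φ ⟦v⟧) (by simp)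
      fun w => ?_⟩
  obtain ⟨q, rfl⟩ := φ.surjective w
  obtain ⟨u, rfl⟩ := Quotient.exists_rep q
  rw [← natCard_twinClass_eq hvt u u₀]
  exact Nat.card_congr <| Equiv.subtypeEquivRight fun v => φ.injective.eq_iff.trans Quotient.eq

theorem stmt12 {V : Type*} [Fintype V] (Adj : V → V → Prop)
    (hloopless : ∀ v, ¬ Adj v v)
    (hvt : ∀ u v : V, ∃ e ∈ autGroup Adj, e u = v)
    (hthick : RThick Adj) :
    ∃ (b : ℕ) (W : Type) (_ : Fintype W) (Adj₂ : W → W → Prop),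
      2 ≤ b ∧ DigraphIso Adj (lexAdj Adj₂ b) :=
  stmt12_general Adj hvt hthick
end
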